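/- Let n be a positive even natural number and let σ be a permutation of Fin n that has a cycle C of length s with s > n/2. If every player uses the pointer-following strategy with n/2 openings (a_i 0 = i, a_i (j+1) = σ⁻¹(a_i j); player i wins iff σ(i) ∈ {a_i 0, …, a_i (n/2 − 1)}), then player i loses if and only if i ∈ C; i.e. exactly the s players lying on the long cycle fail and all other players win. -/

import Mathlib

/-- The orbit (cycle) of `i` under the permutation `σ` of `Fin n`, as a finset.
For `n ≥ 1` the powers `σ^0, …, σ^(n-1)` applied to `i` exhaust the orbit. -/
def cycleOf {n : ℕ} (σ : Equiv.Perm (Fin n)) (i : Fin n) : Finset (Fin n) :=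
  (Finset.range n).image (fun k => (σ ^ k) i)

/-- The lockers opened by player `i` using the pointer-following strategy:
`a_i 0 = i` and `a_i (j+1) = σ⁻¹ (a_i j)`, i.e. `a_i j = (σ⁻¹)^j i`. -/
def opened {n : ℕ} (σ : Equiv.Perm (Fin n)) (i : Fin n) (j : ℕ) : Fin n :=
  (σ.symm ^ j) i

/-!
Every point of a permutation of a finite set is periodic, and the cycle through `i` has exactly
`minimalPeriod σ i` elements. Player `i` sees his own label in the `j`-th opened locker iff
`σ^(j+1)` fixes `i`, so he wins iff the length of his cycle is at most `n / 2`. The players on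
the long cycle therefore lose, and every other cycle is disjoint from the long one, so it has at
most `n - s ≤ n / 2` elements.
-/

open Finset Function

theorem Equiv.Perm.minimalPeriod_pos {α : Type*} [Finite α] (σ : Equiv.Perm α) (x : α) :
    0 < minimalPeriod σ x :=
  minimalPeriod_pos_of_mem_periodicPts (σ.injective.mem_periodicPts x)

theorem Equiv.Perm.SameCycle.exists_lt_minimalPeriod_pow_apply_eq {α : Type*} [Finite α]
    {σ : Equiv.Perm α} {x y : α} (h : σ.SameCycle x y) :
    ∃ k < minimalPeriod σ x, (σ ^ k) x = y := by
  obtain ⟨k, rfl⟩ := h.exists_nat_pow_eq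
  refine ⟨k % minimalPeriod σ x, Nat.mod_lt _ (σ.minimalPeriod_pos x), ?_⟩
  simpa only [Equiv.Perm.iterate_eq_pow] using iterate_mod_minimalPeriod_eq (f := σ) (x := x)

section Lockers

variable {n : ℕ} (σ : Equiv.Perm (Fin n))

theorem mem_cycleOf_iff_sameCycle {i x : Fin n} : x ∈ cycleOf σ i ↔ σ.SameCycle i x := by
  simp only [cycleOf, mem_image, mem_range]
  constructor
  · rintro ⟨k, -, rfl⟩
    exact Equiv.Perm.sameCycle_pow_right.mpr (Equiv.Perm.SameCycle.refl σ i)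
  · intro h
    obtain ⟨k, hk, rfl⟩ := h.exists_lt_minimalPeriod_pow_apply_eq
    exact ⟨k, by simpa using hk.trans_le (minimalPeriod_le_card (f := σ) (x := i)), rfl⟩

theorem cycleOf_eq_image_range_minimalPeriod (i : Fin n) :
    cycleOf σ i = (range (minimalPeriod σ i)).image (fun k => (σ ^ k) i) := by
  ext x
  simp only [mem_cycleOf_iff_sameCycle, mem_image, mem_range]
  constructor
  · exact Equiv.Perm.SameCycle.exists_lt_minimalPeriod_pow_apply_eq
  · rintro ⟨k, -, rfl⟩
    exact Equiv.Perm.sameCycle_pow_right.mpr (Equiv.Perm.SameCycle.refl σ i)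

theorem card_cycleOf (i : Fin n) : (cycleOf σ i).card = minimalPeriod σ i := by
  rw [cycleOf_eq_image_range_minimalPeriod, card_image_of_injOn, card_range]
  rw [coe_range]
  simpa only [Equiv.Perm.iterate_eq_pow] using iterate_injOn_Iio_minimalPeriod (f := σ) (x := i)

theorem cycleOf_eq_of_mem {i j : Fin n} (h : j ∈ cycleOf σ i) : cycleOf σ j = cycleOf σ i := by
  rw [mem_cycleOf_iff_sameCycle] at h
  ext x
  simp only [mem_cycleOf_iff_sameCycle]
  exact ⟨h.trans, h.symm.trans⟩

theorem card_cycleOf_add_card_cycleOf_le {i j : Fin n} (h : j ∉ cycleOf σ i) :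
    (cycleOf σ i).card + (cycleOf σ j).card ≤ n := by
  have hdisj : Disjoint (cycleOf σ i) (cycleOf σ j) := by
    refine disjoint_left.mpr fun x hxi hxj => h ?_
    rw [← cycleOf_eq_of_mem σ hxi, cycleOf_eq_of_mem σ hxj, mem_cycleOf_iff_sameCycle]
  rw [← card_union_of_disjoint hdisj]
  simpa using card_le_univ (cycleOf σ i ∪ cycleOf σ j)

theorem opened_eq_apply_iff_isPeriodicPt (i : Fin n) (j : ℕ) :
    opened σ i j = σ i ↔ IsPeriodicPt σ (j + 1) i := by
  rw [opened, ← Equiv.Perm.inv_def, inv_pow, Equiv.Perm.inv_eq_iff_eq, IsPeriodicPt, IsFixedPt,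
    Equiv.Perm.iterate_eq_pow, pow_succ, Equiv.Perm.mul_apply, eq_comm]

theorem apply_mem_image_opened_iff (i : Fin n) (m : ℕ) :
    σ i ∈ (range m).image (opened σ i) ↔ minimalPeriod σ i ≤ m := by
  have hpos := σ.minimalPeriod_pos i
  simp only [mem_image, mem_range, opened_eq_apply_iff_isPeriodicPt,
    isPeriodicPt_iff_minimalPeriod_dvd]
  constructor
  · rintro ⟨j, hj, hdvd⟩
    exact (Nat.le_of_dvd j.succ_pos hdvd).trans hj
  · intro hle
    exact ⟨minimalPeriod σ i - 1, by omega, by rw [Nat.sub_add_cancel hpos]⟩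

end Lockers

theorem cheating_referee_long_cycle_losers_general (n : ℕ)
    (σ : Equiv.Perm (Fin n)) (C : Finset (Fin n)) (s : ℕ)
    (hC : ∃ i₀ : Fin n, C = cycleOf σ i₀) (hcard : C.card = s) (hs : n / 2 < s) :
    ∀ i : Fin n,
      (σ i ∉ (Finset.range (n / 2)).image (opened σ i)) ↔ i ∈ C := by
  obtain ⟨i₀, rfl⟩ := hC
  intro i
  rw [apply_mem_image_opened_iff, not_le, ← card_cycleOf]
  constructor
  · intro hlong
    by_contra hi
    have hsum := card_cycleOf_add_card_cycleOf_le σ hi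
    omega
  · intro hi
    rwa [cycleOf_eq_of_mem σ hi, hcard]

/-- Let `n` be even and positive, and let `σ` be a permutation of `Fin n` having a cycle
`C` of length `s > n/2`.  If every player uses the pointer-following strategy with `n/2`
openings, then player `i` loses (never opens the locker `σ i` containing his label) if
and only if `i ∈ C`: exactly the `s` players on the long cycle fail, all others win. -/
theorem cheating_referee_long_cycle_losers (n : ℕ) (hn : 0 < n) (hne : Even n)
    (σ : Equiv.Perm (Fin n)) (C : Finset (Fin n)) (s : ℕ)
    (hC : ∃ i₀ : Fin n, C = cycleOf σ i₀) (hcard : C.card = s) (hs : n / 2 < s) :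
    ∀ i : Fin n,
      (σ i ∉ (Finset.range (n / 2)).image (opened σ i)) ↔ i ∈ C :=
  cheating_referee_long_cycle_losers_general n σ C s hC hcard hs
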